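/- arXiv:1701.04955 — 4 statements merged into one kernel-verified Lean document; each statement's English description precedes it below -/
import Mathlib

section
/- Consider the open necklace with 12 beads of 2 types given in order by the type sequence (0,0,0,1,1,1,1,0,0,0,0,0) (three green beads, four red beads, five green beads). There do not exist integer cut points 0 = x_0 ≤ x_1 ≤ ⋯ ≤ x_6 ≤ x_7 = 12 such that, assigning piece j (consisting of the beads with indices in [x_j, x_{j+1})) to thief j mod 4 for j = 0,…,6 (distribution order 1,2,3,4,1,2,3), every thief receives exactly 2 beads of type 0 and 1 bead of type 1. -/
/-!
Thief 3 receives a single piece, so that piece holds exactly two green beads and one red one: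
it is `[1, 4)` or `[6, 9)`. In the first case pieces 0–2 lie in `[0, 1)` and contain no red
bead, so thief 2 gets its red bead from the last piece `[x₆, 12)`, which then also holds at least
five green beads. In the second case pieces 4–6 lie in `[9, 12)`, so thief 0 gets its red bead
from the first piece `[0, x₁)`, which then also holds three green beads.
-/

open Finset

section Necklace

variable {α : Type*} [DecidableEq α] {N m : ℕ}

def countIn (β : Fin N → α) (t : α) (a b : ℕ) : ℕ := #{n : Fin N | β n = t ∧ a ≤ n ∧ n < b}

theorem card_share_eq_sum (β : Fin N → α) {x : Fin (m + 2) → ℕ} (hx : Monotone x)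
    (p : Fin (m + 1) → Prop) [DecidablePred p] (t : α) :
    #{n : Fin N | β n = t ∧ ∃ j, p j ∧ x j.castSucc ≤ n ∧ n < x j.succ} =
      ∑ j with p j, countIn β t (x j.castSucc) (x j.succ) := by
  unfold countIn
  rw [← card_biUnion]
  · congr 1
    ext n
    simp only [mem_filter, mem_univ, true_and, mem_biUnion]
    aesop
  · intro i _ j _ hij
    rw [Function.onFun, disjoint_filter]
    rintro n - ⟨-, hi₁, hi₂⟩ ⟨-, hj₁, hj₂⟩
    rcases lt_or_gt_of_ne hij with h | h <;>
      have := hx (Fin.succ_le_castSucc_iff.2 h) <;> omega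

end Necklace

abbrev necklace : Fin 12 → Fin 2 := ![0, 0, 0, 1, 1, 1, 1, 0, 0, 0, 0, 0]

abbrev green (a b : ℕ) : ℕ := countIn necklace 0 a b

abbrev red (a b : ℕ) : ℕ := countIn necklace 1 a b

theorem fair_interval_cases : ∀ a < 13, ∀ b < 13,
    green a b = 2 ∧ red a b = 1 → a = 1 ∧ b = 4 ∨ a = 6 ∧ b = 9 := by
  decide

theorem red_before_one_eq_zero : ∀ a < 13, red a 1 = 0 := by decide

theorem red_from_nine_eq_zero : ∀ b < 13, red 9 b = 0 := by decide

theorem two_lt_green_prefix_of_red_eq_one : ∀ b < 13, red 0 b = 1 → 2 < green 0 b := by decide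

theorem two_lt_green_suffix_of_red_eq_one : ∀ a < 13, red a 12 = 1 → 2 < green a 12 := by decide

theorem stmt3 :
    ¬ ∃ x : Fin 8 → ℕ, Monotone x ∧ x 0 = 0 ∧ x 7 = 12 ∧
      ∀ th : Fin 4,
        ((Finset.univ.filter (fun n : Fin 12 =>
            (![0, 0, 0, 1, 1, 1, 1, 0, 0, 0, 0, 0] : Fin 12 → Fin 2) n = 0 ∧
            ∃ j : Fin 7, (j : ℕ) % 4 = (th : ℕ) ∧
              x j.castSucc ≤ (n : ℕ) ∧ (n : ℕ) < x j.succ)).card = 2 ∧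
         (Finset.univ.filter (fun n : Fin 12 =>
            (![0, 0, 0, 1, 1, 1, 1, 0, 0, 0, 0, 0] : Fin 12 → Fin 2) n = 1 ∧
            ∃ j : Fin 7, (j : ℕ) % 4 = (th : ℕ) ∧
              x j.castSucc ≤ (n : ℕ) ∧ (n : ℕ) < x j.succ)).card = 1) := by
  rintro ⟨x, hx, hx0, hx7, hfair⟩
  have hlt : ∀ i, x i < 13 := fun i => Nat.lt_succ_of_le (hx7 ▸ hx (Fin.le_last i))
  simp only [card_share_eq_sum _ hx] at hfair
  have thief0 : green 0 (x 1) + green (x 4) (x 5) = 2 ∧ red 0 (x 1) + red (x 4) (x 5) = 1 := by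
    simpa [hx0, sum_filter, Fin.sum_univ_succ] using hfair 0
  have thief2 : green (x 2) (x 3) + green (x 6) 12 = 2 ∧ red (x 2) (x 3) + red (x 6) 12 = 1 := by
    simpa [hx7, sum_filter, Fin.sum_univ_succ] using hfair 2
  have thief3 : green (x 3) (x 4) = 2 ∧ red (x 3) (x 4) = 1 := by
    simpa [sum_filter, Fin.sum_univ_succ] using hfair 3
  rcases fair_interval_cases _ (hlt 3) _ (hlt 4) thief3 with ⟨h3, -⟩ | ⟨-, h4⟩
  · have red_piece2 := red_before_one_eq_zero _ (hlt 2)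
    have green_piece6 := two_lt_green_suffix_of_red_eq_one _ (hlt 6)
    rw [h3] at thief2
    omega
  · have red_piece4 := red_from_nine_eq_zero _ (hlt 5)
    have green_piece0 := two_lt_green_prefix_of_red_eq_one _ (hlt 1)
    rw [h4] at thief0
    omega
end

section
/- Let k and b be positive integers with b dividing k, and let W ⊆ [0,k] be a Lebesgue-measurable set. Then there exists t ∈ [0, k-b] such that the Lebesgue measure of W ∩ [t, t+b] equals (b/k) times the Lebesgue measure of W. -/
open MeasureTheory

/-!
The `k / b` windows `[i b, (i + 1) b]` tile `[0, k]` up to null sets, so their `W`-measures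
average to `(b / k) λ(W)`. The window measure `t ↦ λ(W ∩ [t, t + b])` is continuous in `t`
(it is a difference of primitives of `1_W`), so by the intermediate value theorem it attains
this average on `[0, k - b]`.
-/

open Finset in
theorem IsPreconnected.exists_eq_sum_div_card {X : Type*} [TopologicalSpace X] {S : Set X}
    (hS : IsPreconnected S) {f : X → ℝ} (hf : ContinuousOn f S) {ι : Type*} {s : Finset ι}
    (hs : s.Nonempty) {x : ι → X} (hx : ∀ i ∈ s, x i ∈ S) :
    ∃ t ∈ S, f t = (∑ i ∈ s, f (x i)) / #s := by
  set m := (∑ i ∈ s, f (x i)) / #s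
  have hsum : ∑ i ∈ s, f (x i) = ∑ _i ∈ s, m := by
    rw [sum_const, nsmul_eq_mul, mul_div_cancel₀ _ (by exact_mod_cast hs.card_pos.ne')]
  obtain ⟨i, hi, hfi⟩ := exists_le_of_sum_le hs hsum.le
  obtain ⟨j, hj, hfj⟩ := exists_le_of_sum_le hs hsum.ge
  obtain ⟨t, ht, hft⟩ := hS.intermediate_value (hx i hi) (hx j hj) hf ⟨hfi, hfj⟩
  exact ⟨t, ht, hft⟩

section IntervalIntegral

variable {μ : Measure ℝ}

theorem continuous_intervalIntegral_add_right [NullSingletonClass μ] {f : ℝ → ℝ}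
    (hf : ∀ a b, IntervalIntegrable f μ a b) (c : ℝ) :
    Continuous fun t => ∫ x in t..t + c, f x ∂μ := by
  have h : (fun t => ∫ x in t..t + c, f x ∂μ) =
      fun t => (∫ x in (0 : ℝ)..t + c, f x ∂μ) - ∫ x in (0 : ℝ)..t, f x ∂μ := by
    funext t
    exact (intervalIntegral.integral_interval_sub_left (hf _ _) (hf _ _)).symm
  rw [h]
  exact ((intervalIntegral.continuous_primitive hf 0).comp (continuous_add_const c)).sub
    (intervalIntegral.continuous_primitive hf 0)

theorem intervalIntegrable_indicator_one [IsLocallyFiniteMeasure μ] {W : Set ℝ}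
    (hW : MeasurableSet W) (a b : ℝ) : IntervalIntegrable (W.indicator (1 : ℝ → ℝ)) μ a b :=
  (intervalIntegrable_const (c := (1 : ℝ))).mono_fun
    (aestronglyMeasurable_const.indicator hW) (Filter.Eventually.of_forall fun x => by
      by_cases hx : x ∈ W <;> simp [hx])

theorem intervalIntegral_indicator_one [NullSingletonClass μ] {W : Set ℝ} (hW : MeasurableSet W)
    {a b : ℝ} (hab : a ≤ b) :
    ∫ x in a..b, W.indicator 1 x ∂μ = μ.real (W ∩ Set.Icc a b) := by
  rw [intervalIntegral.integral_of_le hab, ← integral_Icc_eq_integral_Ioc,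
    integral_indicator_one hW, measureReal_restrict_apply hW]

theorem continuous_measureReal_inter_Icc_add [NullSingletonClass μ] [IsLocallyFiniteMeasure μ]
    {W : Set ℝ} (hW : MeasurableSet W) {c : ℝ} (hc : 0 ≤ c) :
    Continuous fun t => μ.real (W ∩ Set.Icc t (t + c)) := by
  simpa only [intervalIntegral_indicator_one hW (le_add_of_nonneg_right hc)] using
    continuous_intervalIntegral_add_right (intervalIntegrable_indicator_one (μ := μ) hW) c

theorem sum_measureReal_inter_Icc_nat_mul [NullSingletonClass μ] [IsLocallyFiniteMeasure μ]
    {W : Set ℝ} (hW : MeasurableSet W) {c : ℝ} (hc : 0 ≤ c) {n : ℕ}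
    (hWs : W ⊆ Set.Icc 0 (n * c)) :
    ∑ i ∈ Finset.range n, μ.real (W ∩ Set.Icc (i * c) (i * c + c)) = μ.real W := by
  have hwindows := intervalIntegral.sum_integral_adjacent_intervals (a := fun i : ℕ => i * c)
    (μ := μ) (n := n) fun i _ => intervalIntegrable_indicator_one (μ := μ) hW _ _
  simp only [Nat.cast_succ, add_one_mul, Nat.cast_zero, zero_mul] at hwindows
  simp only [← intervalIntegral_indicator_one hW (le_add_of_nonneg_right hc), hwindows]
  rw [intervalIntegral_indicator_one hW (by positivity), Set.inter_eq_left.2 hWs]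

end IntervalIntegral

theorem stmt6_general (k b : ℕ) (hk : 0 < k) (hbk : b ∣ k)
    (W : Set ℝ) (hWm : MeasurableSet W) (hWs : W ⊆ Set.Icc 0 (k : ℝ)) :
    ∃ t ∈ Set.Icc (0 : ℝ) ((k : ℝ) - (b : ℝ)),
      volume (W ∩ Set.Icc t (t + (b : ℝ))) = ((b : ENNReal) / (k : ENNReal)) * volume W := by
  obtain ⟨n, rfl⟩ := hbk
  have hn : 0 < n := Nat.pos_of_mul_pos_left hk
  have hpts : ∀ i ∈ Finset.range n, (i * b : ℝ) ∈ Set.Icc (0 : ℝ) ((b * n : ℕ) - b) := by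
    intro i hi
    have : (i : ℝ) + 1 ≤ n := by exact_mod_cast Finset.mem_range.1 hi
    refine ⟨by positivity, ?_⟩
    push_cast
    nlinarith [b.cast_nonneg (α := ℝ)]
  obtain ⟨t, ht, hwindow⟩ := isPreconnected_Icc.exists_eq_sum_div_card
    (continuous_measureReal_inter_Icc_add (μ := volume) hWm b.cast_nonneg).continuousOn
    (Finset.nonempty_range_iff.2 hn.ne') hpts
  rw [sum_measureReal_inter_Icc_nat_mul hWm b.cast_nonneg (by simpa [mul_comm] using hWs),
    Finset.card_range] at hwindow
  refine ⟨t, ht, ?_⟩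
  have hWfin : volume W ≠ ⊤ := measure_ne_top_of_subset hWs measure_Icc_lt_top.ne
  have hratio : (b : ENNReal) / ((b * n : ℕ) : ENNReal) = 1 / n := by
    have := ENNReal.mul_div_mul_left 1 (n : ENNReal) (c := b)
      (by exact_mod_cast (Nat.pos_of_mul_pos_right hk).ne') (ENNReal.natCast_ne_top b)
    rwa [mul_one, ← Nat.cast_mul] at this
  rw [← ofReal_measureReal (measure_ne_top_of_subset Set.inter_subset_left hWfin), hwindow,
    ENNReal.ofReal_div_of_pos (by exact_mod_cast hn), ENNReal.ofReal_natCast,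
    ofReal_measureReal hWfin, hratio, one_div, ENNReal.div_eq_inv_mul]

theorem stmt6 (k b : ℕ) (hk : 0 < k) (hb : 0 < b) (hbk : b ∣ k)
    (W : Set ℝ) (hWm : MeasurableSet W) (hWs : W ⊆ Set.Icc 0 (k : ℝ)) :
    ∃ t ∈ Set.Icc (0 : ℝ) ((k : ℝ) - (b : ℝ)),
      volume (W ∩ Set.Icc t (t + (b : ℝ))) = ((b : ENNReal) / (k : ENNReal)) * volume W :=
  stmt6_general k b hk hbk W hWm hWs
end

section
/- Let k and b be integers with 1 ≤ b ≤ k-1, and let W ⊆ [0,k] be a Lebesgue-measurable set. Then either there exists t ∈ [0, k-b] such that λ(W ∩ [t, t+b]) = (b/k)·λ(W), or there exists t ∈ [0, b] such that λ(W ∩ [t, t+(k-b)]) = ((k-b)/k)·λ(W); that is, the necklace contains a balanced subnecklace of length b or of length k-b. -/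
open MeasureTheory

theorem stmt7 (k b : ℕ) (hb : 1 ≤ b) (hbk : b ≤ k - 1)
    (W : Set ℝ) (hWm : MeasurableSet W) (hWs : W ⊆ Set.Icc 0 (k : ℝ)) :
    (∃ t ∈ Set.Icc (0 : ℝ) ((k : ℝ) - (b : ℝ)),
      volume (W ∩ Set.Icc t (t + (b : ℝ))) = ((b : ENNReal) / (k : ENNReal)) * volume W) ∨
    (∃ t ∈ Set.Icc (0 : ℝ) (b : ℝ),
      volume (W ∩ Set.Icc t (t + ((k : ℝ) - (b : ℝ)))) =
        (((k - b : ℕ) : ENNReal) / (k : ENNReal)) * volume W) := by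
  have hbltk : b < k := by omega
  have hk0 : 0 < k := by omega
  have hkR : (0 : ℝ) < (k : ℝ) := by exact_mod_cast hk0
  have hbR : (0 : ℝ) < (b : ℝ) := by exact_mod_cast hb
  have hbkR : (b : ℝ) ≤ (k : ℝ) := by exact_mod_cast hbltk.le
  -- finiteness
  have hIccfin : volume (Set.Icc (0:ℝ) (k:ℝ)) ≠ ⊤ := by
    simp [Real.volume_Icc]
  have hWfin : volume W ≠ ⊤ :=
    ne_top_of_le_ne_top hIccfin (measure_mono hWs)
  have hfinI : ∀ A : Set ℝ, volume (W ∩ A) ≠ ⊤ := fun A =>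
    ne_top_of_le_ne_top hWfin (measure_mono Set.inter_subset_left)
  set T : ℝ := (volume W).toReal with hT
  set m : ℝ → ℝ := fun t => (volume (W ∩ Set.Icc 0 t)).toReal with hm
  -- additivity
  have madd : ∀ s t : ℝ, 0 ≤ s → s ≤ t →
      m t = m s + (volume (W ∩ Set.Icc s t)).toReal := by
    intro s t hs hst
    have hunion : W ∩ Set.Icc 0 t = (W ∩ Set.Icc 0 s) ∪ (W ∩ Set.Icc s t) := by
      rw [← Set.inter_union_distrib_left, Set.Icc_union_Icc_eq_Icc hs hst]
    have hcap : volume ((W ∩ Set.Icc 0 s) ∩ (W ∩ Set.Icc s t)) = 0 := by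
      have hsub : (W ∩ Set.Icc 0 s) ∩ (W ∩ Set.Icc s t) ⊆ {s} := by
        rintro x ⟨⟨_, _, hx1⟩, _, hx2, _⟩
        exact le_antisymm hx1 hx2
      exact measure_mono_null hsub (measure_singleton s)
    have h2 := measure_union_add_inter (μ := volume) (t := W ∩ Set.Icc s t)
      (W ∩ Set.Icc 0 s) (hWm.inter measurableSet_Icc)
    rw [hcap, add_zero] at h2
    simp only [hm]
    rw [hunion, h2, ENNReal.toReal_add (hfinI _) (hfinI _)]
  have m0 : ∀ s : ℝ, s ≤ 0 → m s = 0 := by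
    intro s hs
    have : volume (W ∩ Set.Icc 0 s) = 0 := by
      apply measure_mono_null Set.inter_subset_right
      rw [Real.volume_Icc]
      simp [ENNReal.ofReal_eq_zero.2 (by linarith)]
    simp [hm, this]
  have mk : ∀ s : ℝ, (k : ℝ) ≤ s → m s = T := by
    intro s hs
    have : W ∩ Set.Icc 0 s = W :=
      Set.inter_eq_self_of_subset_left
        (hWs.trans (Set.Icc_subset_Icc_right hs))
    simp [hm, this, hT]
  -- Lipschitz bounds
  have Hmono : ∀ s t : ℝ, s ≤ t → m s ≤ m t := by
    intro s t hst
    exact ENNReal.toReal_mono (hfinI _)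
      (measure_mono (Set.inter_subset_inter_right _ (Set.Icc_subset_Icc_right hst)))
  have Hlip : ∀ s t : ℝ, s ≤ t → m t ≤ m s + (t - s) := by
    intro s t hst
    have hsub : W ∩ Set.Icc 0 t ⊆ (W ∩ Set.Icc 0 s) ∪ Set.Icc s t := by
      rintro x ⟨hxW, hx0, hxt⟩
      rcases le_total x s with h | h
      · exact Or.inl ⟨hxW, hx0, h⟩
      · exact Or.inr ⟨h, hxt⟩
    have h1 : volume (W ∩ Set.Icc 0 t) ≤
        volume (W ∩ Set.Icc 0 s) + ENNReal.ofReal (t - s) := by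
      calc volume (W ∩ Set.Icc 0 t) ≤ volume ((W ∩ Set.Icc 0 s) ∪ Set.Icc s t) :=
            measure_mono hsub
        _ ≤ volume (W ∩ Set.Icc 0 s) + volume (Set.Icc s t) := measure_union_le _ _
        _ = volume (W ∩ Set.Icc 0 s) + ENNReal.ofReal (t - s) := by
            rw [Real.volume_Icc]
    have h2 := ENNReal.toReal_mono
      (by exact ENNReal.add_ne_top.2 ⟨hfinI _, ENNReal.ofReal_ne_top⟩) h1
    rw [ENNReal.toReal_add (hfinI _) ENNReal.ofReal_ne_top,
      ENNReal.toReal_ofReal (by linarith)] at h2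
    exact h2
  have hmc : Continuous m := by
    have : LipschitzWith 1 m := by
      apply LipschitzWith.of_dist_le_mul
      intro s t
      rw [NNReal.coe_one, one_mul, Real.dist_eq, Real.dist_eq, abs_sub_le_iff]
      rcases le_total s t with h | h
      · have h1 := Hmono s t h
        have h2 := Hlip s t h
        have h3 : t - s ≤ |s - t| := by rw [abs_sub_comm]; exact le_abs_self _
        constructor <;> linarith
      · have h1 := Hmono t s h
        have h2 := Hlip t s h
        have h3 : s - t ≤ |s - t| := le_abs_self _
        constructor <;> linarith
    exact this.continuous
  set G : ℝ → ℝ := fun t => m (t + b) - m t + m (t + b - k) with hG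
  have hGc : Continuous G := by
    apply Continuous.add
    · exact (hmc.comp (continuous_id.add continuous_const)).sub hmc
    · exact hmc.comp ((continuous_id.add continuous_const).sub continuous_const)
  set c : ℝ := (b : ℝ) / (k : ℝ) * T with hc
  -- The sum of G over integer points
  have hsum : ∑ j ∈ Finset.range k, G (j : ℝ) = (b : ℝ) * T := by
    have e1 : ∑ j ∈ Finset.range k, G (j : ℝ)
        = (∑ j ∈ Finset.range k, m ((j : ℝ) + b) - ∑ j ∈ Finset.range k, m (j : ℝ))
          + ∑ j ∈ Finset.range k, m ((j : ℝ) + b - k) := by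
      rw [← Finset.sum_sub_distrib, ← Finset.sum_add_distrib]
    have e2 : ∑ j ∈ Finset.range k, m ((j : ℝ) + b)
        = ∑ j ∈ Finset.range k, m (j : ℝ) + (b : ℝ) * T
          - ∑ j ∈ Finset.range b, m (j : ℝ) := by
      have h1 : ∑ j ∈ Finset.range (b + k), m (j : ℝ)
          = ∑ j ∈ Finset.range b, m (j : ℝ) + ∑ j ∈ Finset.range k, m ((b + j : ℕ) : ℝ) :=
        Finset.sum_range_add _ b k
      have h2 : ∑ j ∈ Finset.range (k + b), m (j : ℝ)
          = ∑ j ∈ Finset.range k, m (j : ℝ) + ∑ j ∈ Finset.range b, m ((k + j : ℕ) : ℝ) :=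
        Finset.sum_range_add _ k b
      have h3 : ∑ j ∈ Finset.range b, m ((k + j : ℕ) : ℝ) = (b : ℝ) * T := by
        rw [Finset.sum_congr rfl (fun j _ => mk ((k + j : ℕ) : ℝ) (by exact_mod_cast Nat.le_add_right k j))]
        rw [Finset.sum_const, Finset.card_range, nsmul_eq_mul]
      have h4 : ∀ j : ℕ, m ((b + j : ℕ) : ℝ) = m ((j : ℝ) + b) := by
        intro j; push_cast; ring_nf
      rw [Finset.sum_congr rfl (fun j _ => (h4 j).symm)]
      have hbk' : b + k = k + b := by ring
      rw [hbk'] at h1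
      rw [h2, h3] at h1
      linarith
    have e3 : ∑ j ∈ Finset.range k, m ((j : ℝ) + b - k)
        = ∑ j ∈ Finset.range b, m (j : ℝ) := by
      have hsra := Finset.sum_range_add (fun j : ℕ => m ((j : ℝ) + b - k)) (k - b) b
      rw [show k - b + b = k from by omega] at hsra
      rw [hsra]
      have h1 : ∀ j ∈ Finset.range (k - b), m ((j : ℝ) + b - k) = 0 := by
        intro j hj
        apply m0
        have : j + b ≤ k := by
          have := Finset.mem_range.1 hj; omega
        have : ((j : ℝ) + b) ≤ k := by exact_mod_cast this
        linarith
      rw [Finset.sum_congr rfl h1, Finset.sum_const, smul_zero, zero_add]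
      apply Finset.sum_congr rfl
      intro j hj
      congr 1
      have hcast : (((k - b + j : ℕ)) : ℝ) = (k : ℝ) - b + j := by
        push_cast [Nat.cast_sub hbltk.le]; ring
      rw [hcast]; ring
    rw [e1, e2, e3]; ring
  -- find integer points below and above c
  have hsumc : ∑ _j ∈ Finset.range k, c = (b : ℝ) * T := by
    rw [Finset.sum_const, Finset.card_range, nsmul_eq_mul, hc]
    field_simp
  have hnonempty : (Finset.range k).Nonempty := ⟨0, Finset.mem_range.2 hk0⟩
  obtain ⟨ja, hja, hGa⟩ : ∃ j ∈ Finset.range k, G (j : ℝ) ≤ c := by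
    apply Finset.exists_le_of_sum_le hnonempty
    rw [hsum, hsumc]
  obtain ⟨jb, hjb, hGb⟩ : ∃ j ∈ Finset.range k, c ≤ G (j : ℝ) := by
    apply Finset.exists_le_of_sum_le hnonempty
    rw [hsum, hsumc]
  -- IVT
  obtain ⟨t, ht0, htk, hGt⟩ : ∃ t : ℝ, 0 ≤ t ∧ t ≤ k ∧ G t = c := by
    have hjak : ((ja : ℝ)) ≤ k := by
      have := Finset.mem_range.1 hja; exact_mod_cast this.le
    have hjbk : ((jb : ℝ)) ≤ k := by
      have := Finset.mem_range.1 hjb; exact_mod_cast this.le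
    rcases le_total (ja : ℝ) (jb : ℝ) with h | h
    · have hivt := intermediate_value_Icc h hGc.continuousOn
      have : c ∈ Set.Icc (G ja) (G jb) := ⟨hGa, hGb⟩
      obtain ⟨t, ht, hGt⟩ := hivt this
      exact ⟨t, le_trans (by positivity) ht.1, le_trans ht.2 hjbk, hGt⟩
    · have hivt := intermediate_value_Icc' h hGc.continuousOn
      have : c ∈ Set.Icc (G ja) (G jb) := ⟨hGa, hGb⟩
      obtain ⟨t, ht, hGt⟩ := hivt this
      exact ⟨t, le_trans (by positivity) ht.1, le_trans ht.2 hjak, hGt⟩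
  -- convert
  have hEq : ∀ (A : Set ℝ) (r : ENNReal), r ≠ ⊤ →
      (volume (W ∩ A)).toReal = r.toReal → volume (W ∩ A) = r := by
    intro A r hr h
    exact (ENNReal.toReal_eq_toReal_iff' (hfinI A) hr).1 h
  by_cases hcase : t ≤ (k : ℝ) - b
  · left
    refine ⟨t, ⟨ht0, hcase⟩, ?_⟩
    have hz : m (t + b - k) = 0 := m0 _ (by linarith)
    have hadd := madd t (t + b) ht0 (by linarith)
    have hval : (volume (W ∩ Set.Icc t (t + b))).toReal = c := by
      rw [hG] at hGt
      simp only at hGt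
      rw [hz, add_zero] at hGt
      linarith [hadd]
    apply hEq
    · exact ENNReal.mul_ne_top
        (ne_of_lt (ENNReal.div_lt_top (ENNReal.natCast_ne_top b)
          (by exact_mod_cast hk0.ne')))
        hWfin
    · rw [hval, ENNReal.toReal_mul, ENNReal.toReal_div]
      simp [hc, hT]
  · right
    push_neg at hcase
    set s : ℝ := t + b - k with hs
    have hs0 : 0 ≤ s := by simp only [hs]; linarith
    have hsb : s ≤ b := by simp only [hs]; linarith
    refine ⟨s, ⟨hs0, hsb⟩, ?_⟩
    have hst : s + ((k : ℝ) - b) = t := by simp only [hs]; ring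
    have hsle : s ≤ t := by simp only [hs]; linarith
    have hadd := madd s t hs0 hsle
    have htop : m (t + b) = T := mk _ (by linarith)
    have hval : (volume (W ∩ Set.Icc s t)).toReal = T - c := by
      rw [hG] at hGt
      simp only at hGt
      rw [htop] at hGt
      have : m (t + b - k) = m s := by rw [hs]
      rw [this] at hGt
      linarith [hadd]
    rw [hst]
    apply hEq
    · exact ENNReal.mul_ne_top
        (ne_of_lt (ENNReal.div_lt_top (ENNReal.natCast_ne_top _)
          (by exact_mod_cast hk0.ne')))
        hWfin
    · rw [hval, ENNReal.toReal_mul, ENNReal.toReal_div]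
      simp only [ENNReal.toReal_natCast]
      rw [Nat.cast_sub hbltk.le]
      rw [hc, ← hT]
      field_simp
end

section
/- Let d ≥ 1 and let K be a d-dimensional pseudomanifold. If σ_1, …, σ_{d+1} are pairwise distinct facets of K whose union involves only d+2 vertices of K, then K contains a vertex of degree d+1 (a vertex having exactly d+1 neighbors in the 1-skeleton of K; in fact, a vertex whose link is the boundary of a d-simplex). -/
/-- A (finite, abstract) `d`-pseudomanifold: a pure `d`-dimensional, strongly connected,
downward closed family of finite sets in which every `(d-1)`-face lies in exactly two
facets and the links of all faces of codimension at least two are connected. -/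
def IsPseudomanifold {V : Type*} [DecidableEq V] (d : ℕ) (K : Set (Finset V)) : Prop :=
  -- downward closed (abstract simplicial complex)
  (∀ σ ∈ K, ∀ τ ⊆ σ, τ ∈ K) ∧
  -- dimension at most d
  (∀ σ ∈ K, σ.card ≤ d + 1) ∧
  -- pure: every face is contained in a facet (a face with d+1 vertices)
  (∀ σ ∈ K, ∃ τ ∈ K, σ ⊆ τ ∧ τ.card = d + 1) ∧
  -- every (d-1)-face is contained in exactly two facets
  (∀ σ ∈ K, σ.card = d → {τ | τ ∈ K ∧ σ ⊆ τ ∧ τ.card = d + 1}.ncard = 2) ∧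
  -- strongly connected: the dual graph on facets is connected
  (∀ σ ∈ K, ∀ τ ∈ K, σ.card = d + 1 → τ.card = d + 1 →
    Relation.ReflTransGen
      (fun ρ ρ' : Finset V => ρ ∈ K ∧ ρ' ∈ K ∧ ρ.card = d + 1 ∧ ρ'.card = d + 1 ∧
        (ρ ∩ ρ').card = d) σ τ) ∧
  -- links of faces of codimension at least two are connected
  (∀ σ ∈ K, σ.card + 2 ≤ d + 1 →
    ∀ v w : V, (v ∉ σ ∧ insert v σ ∈ K) → (w ∉ σ ∧ insert w σ ∈ K) →
      Relation.ReflTransGen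
        (fun u u' : V => u ∉ σ ∧ u' ∉ σ ∧ u ≠ u' ∧ insert u (insert u' σ) ∈ K) v w)

/-- If `d+1` pairwise distinct facets of a `d`-pseudomanifold involve only `d+2`
vertices among them, then the pseudomanifold has a vertex of degree `d+1`. -/
theorem stmt12 {V : Type*} [DecidableEq V] (d : ℕ) (hd : 1 ≤ d)
    (K : Set (Finset V)) (hK : IsPseudomanifold d K)
    (σ : Fin (d + 1) → Finset V)
    (hσK : ∀ i, σ i ∈ K) (hσcard : ∀ i, (σ i).card = d + 1)
    (hdist : Function.Injective σ)
    (hunion : (Finset.univ.sup σ).card ≤ d + 2) :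
    ∃ v : V, ({v} : Finset V) ∈ K ∧
      {w : V | w ≠ v ∧ ({v, w} : Finset V) ∈ K}.ncard = d + 1 := by
  obtain ⟨hdown, hdim, hpure, hridge, hconn, hlink⟩ := hK
  set W : Finset V := Finset.univ.sup σ with hWdef
  have hσW : ∀ i, σ i ⊆ W := fun i => Finset.le_sup (Finset.mem_univ i)
  have hne01 : (0 : Fin (d+1)) ≠ ⟨1, by omega⟩ := by
    intro h
    have h' := congrArg Fin.val h
    simp at h'
  have hWcard : W.card = d + 2 := by
    refine le_antisymm hunion ?_
    by_contra h
    push_neg at h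
    have h0 : σ 0 = W := Finset.eq_of_subset_of_card_le (hσW 0) (by rw [hσcard 0]; omega)
    have h1 : σ ⟨1, by omega⟩ = W :=
      Finset.eq_of_subset_of_card_le (hσW _) (by rw [hσcard _]; omega)
    exact hne01 (hdist (h0.trans h1.symm))
  have hx : ∀ i, ∃ a, W \ σ i = {a} := by
    intro i
    refine Finset.card_eq_one.mp ?_
    rw [Finset.card_sdiff_of_subset (hσW i), hWcard, hσcard i]
    omega
  choose x hxspec using hx
  have hxmem : ∀ i, x i ∈ W ∧ x i ∉ σ i := by
    intro i
    have : x i ∈ W \ σ i := by rw [hxspec i]; exact Finset.mem_singleton_self _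
    exact Finset.mem_sdiff.mp this
  have hσeq : ∀ i, σ i = W \ {x i} := by
    intro i
    rw [← hxspec i]
    exact (Finset.sdiff_sdiff_eq_self (hσW i)).symm
  have hxinj : Function.Injective x := by
    intro i j h
    apply hdist
    rw [hσeq i, hσeq j, h]
  set S : Finset V := Finset.univ.image x with hSdef
  have hxS : ∀ i, x i ∈ S := fun i => Finset.mem_image_of_mem x (Finset.mem_univ i)
  have hScard : S.card = d + 1 := by
    rw [hSdef, Finset.card_image_of_injective _ hxinj, Finset.card_univ, Fintype.card_fin]
  have hSW : S ⊆ W := by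
    intro a ha
    obtain ⟨i, -, rfl⟩ := Finset.mem_image.mp ha
    exact (hxmem i).1
  obtain ⟨z, hzspec⟩ : ∃ z, W \ S = {z} := by
    refine Finset.card_eq_one.mp ?_
    rw [Finset.card_sdiff_of_subset hSW, hWcard, hScard]
    omega
  have hzmem : z ∈ W ∧ z ∉ S := by
    have : z ∈ W \ S := by rw [hzspec]; exact Finset.mem_singleton_self _
    exact Finset.mem_sdiff.mp this
  have hWS : ∀ a ∈ W, a ∉ S → a = z := by
    intro a haW haS
    have : a ∈ W \ S := Finset.mem_sdiff.mpr ⟨haW, haS⟩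
    rw [hzspec] at this
    exact Finset.mem_singleton.mp this
  have hzx : ∀ i, z ≠ x i := by
    intro i h
    exact hzmem.2 (h ▸ hxS i)
  have hzσ : ∀ i, z ∈ σ i := by
    intro i
    rw [hσeq i]
    exact Finset.mem_sdiff.mpr ⟨hzmem.1, by simp [hzx i]⟩
  -- any subset of W missing some x i is a face
  have hsub : ∀ (i : Fin (d+1)) (τ : Finset V), τ ⊆ W → x i ∉ τ → τ ∈ K := by
    intro i τ hτ hxi
    refine hdown (σ i) (hσK i) τ ?_
    intro a ha
    rw [hσeq i]
    refine Finset.mem_sdiff.mpr ⟨hτ ha, ?_⟩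
    simp only [Finset.mem_singleton]
    rintro rfl
    exact hxi ha
  -- base case: codimension ≤ 1 faces containing z inside W
  have base : ∀ τ ∈ K, z ∈ τ → τ ⊆ W → d ≤ τ.card →
      ∀ ρ ∈ K, τ ⊆ ρ → ρ.card = d + 1 → ρ ⊆ W := by
    intro τ hτK hzτ hτW hdle ρ hρK hτρ hρcard
    have hτle : τ.card ≤ d + 1 := hρcard ▸ Finset.card_le_card hτρ
    rcases eq_or_lt_of_le hdle with h | h
    · -- ridge case: τ.card = d
      have h2 : (W \ τ).card = 2 := by rw [Finset.card_sdiff_of_subset hτW, hWcard]; omega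
      obtain ⟨a, b, hab, habs⟩ := Finset.card_eq_two.mp h2
      have haWτ : a ∈ W ∧ a ∉ τ := Finset.mem_sdiff.mp (by rw [habs]; simp)
      have hbWτ : b ∈ W ∧ b ∉ τ := Finset.mem_sdiff.mp (by rw [habs]; simp)
      have haS : a ∈ S := by
        by_contra hc
        exact haWτ.2 ((hWS a haWτ.1 hc) ▸ hzτ)
      have hbS : b ∈ S := by
        by_contra hc
        exact hbWτ.2 ((hWS b hbWτ.1 hc) ▸ hzτ)
      obtain ⟨i, -, hi⟩ := Finset.mem_image.mp haS
      obtain ⟨j, -, hj⟩ := Finset.mem_image.mp hbS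
      have hτσi : τ ⊆ σ i := by
        rw [hσeq i]
        intro c hc
        refine Finset.mem_sdiff.mpr ⟨hτW hc, ?_⟩
        simp only [Finset.mem_singleton]
        rintro rfl
        exact haWτ.2 (hi ▸ hc)
      have hτσj : τ ⊆ σ j := by
        rw [hσeq j]
        intro c hc
        refine Finset.mem_sdiff.mpr ⟨hτW hc, ?_⟩
        simp only [Finset.mem_singleton]
        rintro rfl
        exact hbWτ.2 (hj ▸ hc)
      have hσij : σ i ≠ σ j := by
        intro h'
        exact hab (hi ▸ hj ▸ congrArg (x) (hdist h'))
      obtain ⟨p, q, hpq, hT⟩ := Set.ncard_eq_two.mp (hridge τ hτK (by omega))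
      have hmem : ∀ ρ' : Finset V, ρ' ∈ K → τ ⊆ ρ' → ρ'.card = d + 1 → ρ' = p ∨ ρ' = q := by
        intro ρ' h1 h2' h3
        have : ρ' ∈ ({p, q} : Set (Finset V)) := hT ▸ ⟨h1, h2', h3⟩
        simpa using this
      have hipq := hmem (σ i) (hσK i) hτσi (hσcard i)
      have hjpq := hmem (σ j) (hσK j) hτσj (hσcard j)
      have hρpq := hmem ρ hρK hτρ hρcard
      have : ρ = σ i ∨ ρ = σ j := by
        rcases hipq with h1 | h1 <;> rcases hjpq with h2 | h2 <;>
          rcases hρpq with h3 | h3 <;> first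
          | (exact absurd (h1.trans h2.symm) hσij)
          | (exact Or.inl (h3.trans h1.symm))
          | (exact Or.inr (h3.trans h2.symm))
      rcases this with h' | h'
      · rw [h']; exact hσW i
      · rw [h']; exact hσW j
    · -- τ.card = d + 1
      have : ρ = τ := (Finset.eq_of_subset_of_card_le hτρ (by omega)).symm
      rw [this]; exact hτW
  -- main lemma by induction on codimension
  have main : ∀ k : ℕ, ∀ τ ∈ K, z ∈ τ → τ ⊆ W → d ≤ τ.card + k →
      ∀ ρ ∈ K, τ ⊆ ρ → ρ.card = d + 1 → ρ ⊆ W := by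
    intro k
    induction k with
    | zero =>
      intro τ hτK hzτ hτW hdle
      exact base τ hτK hzτ hτW (by omega)
    | succ k ih =>
      intro τ hτK hzτ hτW hdle ρ hρK hτρ hρcard
      rcases le_or_gt d τ.card with hc | hc
      · exact base τ hτK hzτ hτW hc ρ hρK hτρ hρcard
      · intro a haρ
        by_contra haW
        have haτ : a ∉ τ := fun h => haW (hτW h)
        have haK : insert a τ ∈ K :=
          hdown ρ hρK _ (Finset.insert_subset haρ hτρ)
        -- two elements of S avoiding τ
        have h2 : 2 ≤ (S \ τ).card := by
          have h1 : (S ∩ τ).card ≤ τ.card := Finset.card_le_card Finset.inter_subset_right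
          have h3 : (S \ τ).card + (S ∩ τ).card = S.card := Finset.card_sdiff_add_card_inter S τ
          omega
        obtain ⟨u, hu, v, hv, huv⟩ := Finset.one_lt_card.mp (by omega : 1 < (S \ τ).card)
        have huS := Finset.mem_sdiff.mp hu
        have hvS := Finset.mem_sdiff.mp hv
        obtain ⟨i, -, rfl⟩ := Finset.mem_image.mp huS.1
        obtain ⟨j, -, rfl⟩ := Finset.mem_image.mp hvS.1
        have hxiK : insert (x i) τ ∈ K := by
          refine hsub j _ (Finset.insert_subset (hxmem i).1 hτW) ?_
          simp only [Finset.mem_insert]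
          rintro (h | h)
          · exact huv h.symm
          · exact hvS.2 h
        have hpath := hlink τ hτK (by omega) a (x i) ⟨haτ, haK⟩ ⟨huS.2, hxiK⟩
        have key : ∀ b, Relation.ReflTransGen
            (fun u u' : V => u ∉ τ ∧ u' ∉ τ ∧ u ≠ u' ∧ insert u (insert u' τ) ∈ K) a b →
            b ∉ W := by
          intro b hb
          induction hb with
          | refl => exact haW
          | tail hp hs ihb =>
            rename_i b' c'
            obtain ⟨hb'τ, hcτ, hbc, hbcK⟩ := hs
            intro hcW
            have hτ'K : insert c' τ ∈ K := hdown _ hbcK _ (Finset.subset_insert _ _)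
            obtain ⟨ρ', hρ'K, hsub', hρ'card⟩ := hpure _ hbcK
            have hρ'W : ρ' ⊆ W := by
              refine ih (insert c' τ) hτ'K (Finset.mem_insert_of_mem hzτ)
                (Finset.insert_subset hcW hτW)
                (by rw [Finset.card_insert_of_notMem hcτ]; omega)
                ρ' hρ'K ((Finset.subset_insert _ _).trans hsub') hρ'card
            exact ihb (hρ'W (hsub' (Finset.mem_insert_self _ _)))
        exact key (x i) hpath (hxmem i).1
  -- the vertex z works
  have hz1K : ({z} : Finset V) ∈ K :=
    hdown (σ 0) (hσK 0) {z} (Finset.singleton_subset_iff.mpr (hzσ 0))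
  refine ⟨z, hz1K, ?_⟩
  have hset : {w : V | w ≠ z ∧ ({z, w} : Finset V) ∈ K} = ↑S := by
    ext w
    simp only [Set.mem_setOf_eq, Finset.mem_coe]
    constructor
    · rintro ⟨hwz, hwK⟩
      obtain ⟨ρ, hρK, hρsub, hρcard⟩ := hpure _ hwK
      have hρW : ρ ⊆ W :=
        main d {z} hz1K (Finset.mem_singleton_self z)
          (Finset.singleton_subset_iff.mpr hzmem.1)
          (by rw [Finset.card_singleton]; omega)
          ρ hρK ((Finset.singleton_subset_iff.mpr (Finset.mem_insert_self z _)).trans hρsub)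
          hρcard
      have hwW : w ∈ W := hρW (hρsub (by simp))
      by_contra hwS
      exact hwz (hWS w hwW hwS)
    · intro hwS
      obtain ⟨i, -, rfl⟩ := Finset.mem_image.mp hwS
      obtain ⟨j, hj⟩ := Fintype.exists_ne_of_one_lt_card
        (by rw [Fintype.card_fin]; omega) i
      refine ⟨fun h => hzx i h.symm, ?_⟩
      refine hdown (σ j) (hσK j) _ ?_
      refine Finset.insert_subset (hzσ j) (Finset.singleton_subset_iff.mpr ?_)
      rw [hσeq j]
      refine Finset.mem_sdiff.mpr ⟨(hxmem i).1, ?_⟩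
      simp only [Finset.mem_singleton]
      exact fun h => hj (hxinj h).symm
  rw [hset, Set.ncard_coe_finset, hScard]
end
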